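/- Let σ ≥ 1/√2 and define s(z) = (1 + 2σz + (σ² − 1/2)z²) / (1 + (1+2σ)z + (σ² + 2σ)z² + σ²z³). Then s(0) = 1, and 0 < s(z) < 1 for every z > 0. -/

import Mathlib

/-! Write `s = N / D`. Since `σ² ≥ 1/2`, every coefficient of `N` is nonnegative, so `N ≥ 1` on
`[0, ∞)`; and `D - N = z (1 + (2σ + 1/2) z + σ² z²)` is positive for `z > 0` as soon as `σ ≥ 0`.
Hence `0 < N < D`, i.e. `0 < s < 1`, on `(0, ∞)`. -/

namespace FactorizedScheme

noncomputable def stabilityNum (σ z : ℝ) : ℝ := 1 + 2 * σ * z + (σ ^ 2 - 1 / 2) * z ^ 2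

def stabilityDen (σ z : ℝ) : ℝ :=
  1 + (1 + 2 * σ) * z + (σ ^ 2 + 2 * σ) * z ^ 2 + σ ^ 2 * z ^ 3

theorem nonneg_and_half_le_sq_of_inv_sqrt_two_le {σ : ℝ} (hσ : 1 / Real.sqrt 2 ≤ σ) :
    0 ≤ σ ∧ 1 / 2 ≤ σ ^ 2 := by
  rw [one_div, ← Real.sqrt_inv, Real.sqrt_le_iff] at hσ
  simpa only [one_div] using hσ

variable {σ z : ℝ}

theorem stabilityDen_sub_stabilityNum :
    stabilityDen σ z - stabilityNum σ z = z * (1 + (2 * σ + 1 / 2) * z + σ ^ 2 * z ^ 2) := by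
  unfold stabilityDen stabilityNum
  ring

theorem one_le_stabilityNum (hσ : 0 ≤ σ) (hσ2 : 1 / 2 ≤ σ ^ 2) (hz : 0 ≤ z) :
    1 ≤ stabilityNum σ z := by
  unfold stabilityNum
  have hquad : 0 ≤ (σ ^ 2 - 1 / 2) * z ^ 2 := mul_nonneg (by linarith) (sq_nonneg z)
  nlinarith [mul_nonneg hσ hz]

theorem stabilityNum_lt_stabilityDen (hσ : 0 ≤ σ) (hz : 0 < z) :
    stabilityNum σ z < stabilityDen σ z := by
  have hfactor : 0 < 1 + (2 * σ + 1 / 2) * z + σ ^ 2 * z ^ 2 := by positivity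
  linarith [stabilityDen_sub_stabilityNum (σ := σ) (z := z), mul_pos hz hfactor]

end FactorizedScheme

open FactorizedScheme in
/-- For `σ ≥ 1/√2`, the stability function
`s(z) = (1 + 2σz + (σ² − 1/2)z²)/(1 + (1+2σ)z + (σ² + 2σ)z² + σ²z³)`
satisfies `s(0) = 1` and `0 < s(z) < 1` for every `z > 0`. -/
theorem stmt_7 (σ : ℝ) (hσ : 1 / Real.sqrt 2 ≤ σ)
    (s : ℝ → ℝ)
    (hs : ∀ z : ℝ, s z =
      (1 + 2 * σ * z + (σ ^ 2 - 1 / 2) * z ^ 2)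
      / (1 + (1 + 2 * σ) * z + (σ ^ 2 + 2 * σ) * z ^ 2 + σ ^ 2 * z ^ 3)) :
    s 0 = 1 ∧ ∀ z : ℝ, 0 < z → 0 < s z ∧ s z < 1 := by
  obtain ⟨hσ0, hσ2⟩ := nonneg_and_half_le_sq_of_inv_sqrt_two_le hσ
  refine ⟨by norm_num [hs 0], fun z hz => ?_⟩
  have hN : 0 < stabilityNum σ z := one_pos.trans_le (one_le_stabilityNum hσ0 hσ2 hz.le)
  have hND : stabilityNum σ z < stabilityDen σ z := stabilityNum_lt_stabilityDen hσ0 hz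
  rw [hs z]
  exact ⟨div_pos hN (hN.trans hND), (div_lt_one (hN.trans hND)).mpr hND⟩
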